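/- arXiv:2103.14897 — 3 statements merged into one kernel-verified Lean document; each statement's English description precedes it below -/
import Mathlib

section
/- Let A₁, A₂ ∈ ℝ^{d×d} be invertible and suppose the lattices R₁, R₂ are incommensurate. Then the plane waves e^{i(G₁ₘ+G₂ₙ)·x}, indexed by (m,n) ∈ ℤ^d × ℤ^d, are orthonormal with respect to the averaged inner product: lim_{R→∞} (1/|B_R|) ∫_{B_R} e^{-i(G₁ₘ+G₂ₙ)·x} e^{i(G₁ₘ'+G₂ₙ')·x} dx = δ_{mm'} δ_{nn'}. -/
/-!
For `k ≠ 0` the plane wave `x ↦ exp (i ⟪k, x⟫)` is antiperiodic with antiperiod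
`c = (π / ‖k‖²) • k`, so its integral over `B(0, R)` is minus its integral over `B(c, R)`.
The two balls differ only inside an annulus of width `2‖c‖`, whose volume is `o(R^d)`;
hence the ball averages tend to `0`. The product of two plane waves is the plane wave of the
difference of their frequencies, and incommensurability makes the two reciprocal lattices meet
only in `0`, so that difference vanishes only when `m = m'` and `n = n'`.
-/

open Matrix Real MeasureTheory Filter Classical Metric Topology
open scoped RealInnerProductSpace

section SetIntegral

variable {α F : Type*} [MeasurableSpace α] {μ : Measure α} [NormedAddCommGroup F]
  [NormedSpace ℝ F]

theorem norm_setIntegral_sub_setIntegral_le {f : α → F} {s t : Set α} {C : ℝ}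
    (hs : MeasurableSet s) (ht : MeasurableSet t) (hμs : μ s ≠ ⊤) (hμt : μ t ≠ ⊤)
    (hf : AEStronglyMeasurable f μ) (hC : ∀ x, ‖f x‖ ≤ C) :
    ‖∫ x in s, f x ∂μ - ∫ x in t, f x ∂μ‖ ≤ C * μ.real (symmDiff s t) := by
  have hfs := Measure.integrableOn_of_bounded hμs hf (ae_of_all _ hC)
  have hft := Measure.integrableOn_of_bounded hμt hf (ae_of_all _ hC)
  rw [← integral_inter_add_sdiff ht hfs, ← integral_inter_add_sdiff hs hft, Set.inter_comm,
    add_sub_add_left_eq_sub, measureReal_symmDiff_eq hs ht hμs hμt, mul_add]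
  calc _ ≤ ‖∫ x in s \ t, f x ∂μ‖ + ‖∫ x in t \ s, f x ∂μ‖ := norm_sub_le _ _
    _ ≤ _ := add_le_add
        (norm_setIntegral_le_of_norm_le_const
          ((measure_mono Set.sdiff_subset).trans_lt hμs.lt_top) fun x _ => hC x)
        (norm_setIntegral_le_of_norm_le_const
          ((measure_mono Set.sdiff_subset).trans_lt hμt.lt_top) fun x _ => hC x)

end SetIntegral

theorem Metric.symmDiff_ball_subset {X : Type*} [PseudoMetricSpace X] (x y : X) (r : ℝ) :
    symmDiff (ball x r) (ball y r) ⊆ ball x (r + dist x y) \ ball x (r - dist x y) := by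
  have := dist_nonneg (x := x) (y := y)
  rintro z (⟨hzx, hzy⟩ | ⟨hzy, hzx⟩) <;>
    simp only [Set.mem_sdiff, mem_ball, not_lt] at * <;>
    constructor <;>
    linarith [dist_triangle z x y, dist_triangle z y x, dist_comm x y]

section AddHaar

variable {E : Type*} [NormedAddCommGroup E] [NormedSpace ℝ E] [FiniteDimensional ℝ E]
  [MeasurableSpace E] [BorelSpace E] (μ : Measure E) [μ.IsAddHaarMeasure]

theorem MeasureTheory.Measure.addHaar_real_ball_of_pos (x : E) {r : ℝ} (hr : 0 < r) :
    μ.real (ball x r) = r ^ Module.finrank ℝ E * μ.real (ball 0 1) := by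
  rw [measureReal_def, Measure.addHaar_ball_of_pos μ x hr, ENNReal.toReal_mul,
    ENNReal.toReal_ofReal (by positivity), measureReal_def]

theorem tendsto_addHaar_real_annulus_div_ball (x : E) {a : ℝ} (ha : 0 ≤ a) :
    Tendsto (fun R => μ.real (ball x (R + a) \ ball x (R - a)) / μ.real (ball x R))
      atTop (𝓝 0) := by
  have hunit : 0 < μ.real (ball (0 : E) 1) :=
    ENNReal.toReal_pos (measure_ball_pos μ _ one_pos).ne' measure_ball_lt_top.ne
  have hlim : Tendsto (fun R : ℝ =>
      (1 + a / R) ^ Module.finrank ℝ E - (1 - a / R) ^ Module.finrank ℝ E) atTop (𝓝 0) := by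
    have ha' : Tendsto (fun R : ℝ => a / R) atTop (𝓝 0) :=
      tendsto_const_nhds.div_atTop tendsto_id
    simpa using ((tendsto_const_nhds (x := (1 : ℝ))).add ha' |>.pow _).sub
      ((tendsto_const_nhds (x := (1 : ℝ))).sub ha' |>.pow _)
  refine hlim.congr' ?_
  filter_upwards [eventually_gt_atTop a] with R haR
  have hR : 0 < R := ha.trans_lt haR
  rw [measureReal_sdiff (ball_subset_ball (by linarith)) measurableSet_ball measure_ball_lt_top.ne,
    Measure.addHaar_real_ball_of_pos μ x (by linarith),
    Measure.addHaar_real_ball_of_pos μ x (by linarith), Measure.addHaar_real_ball_of_pos μ x hR,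
    one_add_div hR.ne', one_sub_div hR.ne', div_pow, div_pow]
  field_simp

theorem Function.Antiperiodic.tendsto_setAverage_ball {F : Type*} [NormedAddCommGroup F]
    [NormedSpace ℝ F] {f : E → F} {c : E} (hf : Function.Antiperiodic f c)
    (hmeas : AEStronglyMeasurable f μ) {C : ℝ} (hC : ∀ x, ‖f x‖ ≤ C) (x : E) :
    Tendsto (fun R => ⨍ y in ball x R, f y ∂μ) atTop (𝓝 0) := by
  have htranslate (R : ℝ) :
      ∫ y in ball (x + c) R, f y ∂μ = -∫ y in ball x R, f y ∂μ := by
    rw [← (measurePreserving_add_right μ c).setIntegral_preimage_emb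
      (measurableEmbedding_addRight c), preimage_add_right_ball, add_sub_cancel_right]
    simp_rw [show ∀ y, f (y + c) = -f y from hf]
    exact integral_neg _
  have hbound (R : ℝ) : ‖⨍ y in ball x R, f y ∂μ‖ ≤
      C / 2 * (μ.real (ball x (R + ‖c‖) \ ball x (R - ‖c‖)) / μ.real (ball x R)) := by
    have hsymm : 2 * ‖∫ y in ball x R, f y ∂μ‖ ≤
        C * μ.real (ball x (R + ‖c‖) \ ball x (R - ‖c‖)) :=
      calc 2 * ‖∫ y in ball x R, f y ∂μ‖
          = ‖∫ y in ball x R, f y ∂μ - ∫ y in ball (x + c) R, f y ∂μ‖ := by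
            rw [htranslate, sub_neg_eq_add, ← two_smul ℝ, norm_smul, Real.norm_two]
        _ ≤ C * μ.real (symmDiff (ball x R) (ball (x + c) R)) :=
            norm_setIntegral_sub_setIntegral_le measurableSet_ball measurableSet_ball
              measure_ball_lt_top.ne measure_ball_lt_top.ne hmeas hC
        _ ≤ C * μ.real (ball x (R + ‖c‖) \ ball x (R - ‖c‖)) := by
            gcongr
            · exact (norm_nonneg _).trans (hC x)
            · exact measure_ne_top_of_subset Set.sdiff_subset measure_ball_lt_top.ne
            · simpa using symmDiff_ball_subset x (x + c) R
    rw [setAverage_eq, norm_smul, norm_inv, Real.norm_of_nonneg measureReal_nonneg]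
    calc _ ≤ (μ.real (ball x R))⁻¹ *
          (C / 2 * μ.real (ball x (R + ‖c‖) \ ball x (R - ‖c‖))) := by
          gcongr
          linarith
      _ = _ := by ring
  refine squeeze_zero_norm hbound ?_
  simpa using (tendsto_addHaar_real_annulus_div_ball μ x (norm_nonneg c)).const_mul (C / 2)

end AddHaar

theorem Complex.antiperiodic_exp_inner {E : Type*} [NormedAddCommGroup E]
    [InnerProductSpace ℝ E] {k : E} (hk : k ≠ 0) :
    Function.Antiperiodic (fun x : E => Complex.exp (Complex.I * (⟪k, x⟫ : ℝ)))
      ((π / ‖k‖ ^ 2) • k) := by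
  intro x
  have hshift : ⟪k, x + (π / ‖k‖ ^ 2) • k⟫ = ⟪k, x⟫ + π := by
    rw [inner_add_right, real_inner_smul_right, real_inner_self_eq_norm_sq,
      div_mul_cancel₀ _ (by positivity)]
  simp only [hshift, Complex.ofReal_add, mul_add, Complex.exp_add, mul_comm Complex.I (π : ℂ),
    Complex.exp_pi_mul_I, mul_neg_one]

section InnerProduct

variable {E : Type*} [NormedAddCommGroup E] [InnerProductSpace ℝ E] [FiniteDimensional ℝ E]
  [MeasurableSpace E] [BorelSpace E] (μ : Measure E) [μ.IsAddHaarMeasure]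

theorem tendsto_setAverage_ball_exp_inner (k x : E) :
    Tendsto (fun R => ⨍ y in ball x R, Complex.exp (Complex.I * (⟪k, y⟫ : ℝ)) ∂μ) atTop
      (𝓝 (if k = 0 then 1 else 0)) := by
  split_ifs with hk
  · subst hk
    refine tendsto_const_nhds.congr' ?_
    filter_upwards [eventually_gt_atTop 0] with R hR
    simp only [inner_zero_left, Complex.ofReal_zero, mul_zero, Complex.exp_zero]
    exact (setAverage_const (measure_ball_pos μ x hR).ne' measure_ball_lt_top.ne 1).symm
  · refine (Complex.antiperiodic_exp_inner hk).tendsto_setAverage_ball μ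
      (by fun_prop : Continuous _).aestronglyMeasurable (C := 1)
      (fun y => (Complex.norm_exp_I_mul_ofReal _).le) x

end InnerProduct

def Incommensurate {V : Type*} [AddZeroClass V] (L₁ L₂ : Set V) : Prop :=
  ∀ γ : V, (fun v => γ + v) '' (L₁ ∪ L₂) = L₁ ∪ L₂ → γ = 0

theorem AddSubgroup.inf_eq_bot_of_incommensurate {V : Type*} [AddGroup V]
    {S T : AddSubgroup V} (h : Incommensurate (S : Set V) T) : S ⊓ T = ⊥ := by
  refine (eq_bot_iff_forall _).2 fun γ hγ => h γ ?_
  obtain ⟨hS, hT⟩ := AddSubgroup.mem_inf.1 hγ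
  ext v
  simp only [Set.image_add_left, Set.mem_preimage, Set.mem_union, SetLike.mem_coe,
    add_mem_cancel_left (neg_mem hS), add_mem_cancel_left (neg_mem hT)]

theorem AddMonoidHom.add_eq_add_iff_of_incommensurate {M N V : Type*} [AddCommGroup M]
    [AddCommGroup N] [AddCommGroup V] {f : M →+ V} {g : N →+ V} (hf : Function.Injective f)
    (hg : Function.Injective g) (h : Incommensurate (Set.range f) (Set.range g))
    {m m' : M} {n n' : N} : f m + g n = f m' + g n' ↔ m = m' ∧ n = n' := by
  refine ⟨fun heq => ?_, fun ⟨hm, hn⟩ => hm ▸ hn ▸ rfl⟩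
  have hdiff : f (m - m') = g (n' - n) := by
    rw [map_sub, map_sub, sub_eq_sub_iff_add_eq_add, heq, add_comm]
  have hzero : f (m - m') ∈ f.range ⊓ g.range := ⟨⟨_, rfl⟩, hdiff ▸ ⟨_, rfl⟩⟩
  rw [AddSubgroup.inf_eq_bot_of_incommensurate (by simpa using h), AddSubgroup.mem_bot] at hzero
  refine ⟨sub_eq_zero.1 (hf (hzero.trans (map_zero f).symm)), ?_⟩
  rw [hdiff] at hzero
  exact (sub_eq_zero.1 (hg (hzero.trans (map_zero g).symm))).symm

section Reciprocal

variable {ι : Type*} [Fintype ι] [DecidableEq ι]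

noncomputable def reciprocalLattice (A : Matrix ι ι ℝ) : (ι → ℤ) →+ (ι → ℝ) where
  toFun m := (2 * π) • ((A⁻¹)ᵀ *ᵥ fun i => (m i : ℝ))
  map_zero' := by
    simp only [Pi.zero_apply, Int.cast_zero, ← Pi.zero_def, mulVec_zero, smul_zero]
  map_add' m n := by
    simp only [Pi.add_apply, Int.cast_add, ← Pi.add_def, mulVec_add, smul_add]

theorem reciprocalLattice_injective {A : Matrix ι ι ℝ} (hA : IsUnit A.det) :
    Function.Injective (reciprocalLattice A) := by
  have hB : IsUnit (A⁻¹)ᵀ :=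
    (Matrix.isUnit_iff_isUnit_det _).2 (isUnit_det_transpose _ (isUnit_nonsing_inv_det A hA))
  intro m n hmn
  have := (mulVec_injective_of_isUnit hB) (smul_right_injective _ (by positivity) hmn)
  funext i
  exact_mod_cast congrFun this i

end Reciprocal

/-- Orthonormality of the plane waves `e^{i(G₁ₘ+G₂ₙ)·x}` for incommensurate lattices,
with respect to the averaged inner product. -/
theorem planewaves_orthonormal {d : ℕ} (A₁ A₂ : Matrix (Fin d) (Fin d) ℝ)
    (h₁ : IsUnit A₁.det) (h₂ : IsUnit A₂.det)
    (G₁ G₂ : (Fin d → ℤ) → EuclideanSpace ℝ (Fin d))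
    (hG₁ : ∀ m, G₁ m = (EuclideanSpace.equiv (Fin d) ℝ).symm
      ((2 * π) • ((A₁⁻¹)ᵀ *ᵥ fun i => (m i : ℝ))))
    (hG₂ : ∀ n, G₂ n = (EuclideanSpace.equiv (Fin d) ℝ).symm
      ((2 * π) • ((A₂⁻¹)ᵀ *ᵥ fun i => (n i : ℝ))))
    (L₁ L₂ : Set (Fin d → ℝ))
    (hL₁ : L₁ = {v | ∃ n : Fin d → ℤ, v = (2 * π) • ((A₁⁻¹)ᵀ *ᵥ fun i => (n i : ℝ))})
    (hL₂ : L₂ = {v | ∃ n : Fin d → ℤ, v = (2 * π) • ((A₂⁻¹)ᵀ *ᵥ fun i => (n i : ℝ))})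
    (hinc : ∀ γ : Fin d → ℝ, (fun v => γ + v) '' (L₁ ∪ L₂) = L₁ ∪ L₂ → γ = 0) :
    ∀ m n m' n' : Fin d → ℤ,
      Tendsto (fun R : ℝ =>
          ((volume (Metric.ball (0 : EuclideanSpace ℝ (Fin d)) R)).toReal)⁻¹ •
            ∫ x in Metric.ball (0 : EuclideanSpace ℝ (Fin d)) R,
              Complex.exp (-Complex.I * (⟪G₁ m + G₂ n, x⟫ : ℝ)) *
                Complex.exp (Complex.I * (⟪G₁ m' + G₂ n', x⟫ : ℝ)))
        atTop (nhds (if m = m' ∧ n = n' then (1 : ℂ) else 0)) := by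
  intro m n m' n'
  have hrange (A : Matrix (Fin d) (Fin d) ℝ) :
      Set.range (reciprocalLattice A) =
        {v | ∃ n : Fin d → ℤ, v = (2 * π) • ((A⁻¹)ᵀ *ᵥ fun i => (n i : ℝ))} := by
    ext v; exact exists_congr fun _ => eq_comm
  have hL : Incommensurate (Set.range (reciprocalLattice A₁))
      (Set.range (reciprocalLattice A₂)) := by
    rw [hrange, hrange, ← hL₁, ← hL₂]
    exact hinc
  set k := (G₁ m' + G₂ n') - (G₁ m + G₂ n)
  have hk : k = 0 ↔ m = m' ∧ n = n' := by
    rw [sub_eq_zero, hG₁, hG₁, hG₂, hG₂, ← map_add, ← map_add,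
      (EuclideanSpace.equiv (Fin d) ℝ).symm.injective.eq_iff]
    exact (AddMonoidHom.add_eq_add_iff_of_incommensurate (reciprocalLattice_injective h₁)
      (reciprocalLattice_injective h₂) hL).trans (and_congr eq_comm eq_comm)
  convert tendsto_setAverage_ball_exp_inner volume k 0 using 2 with R
  · rw [setAverage_eq]
    congr 1
    refine setIntegral_congr_fun measurableSet_ball fun x _ => ?_
    rw [← Complex.exp_add, inner_sub_left, Complex.ofReal_sub]
    congr 1
    ring
  · simp only [hk]
end

section
/- Let H₁, H₂ ∈ ℂ^{N×N} be Hermitian, τ > 0, and suppose Φ^{k+1/3}, Φ^{k+2/3}, Φ^{k+1} (one step of the Crank-Nicolson Strang splitting scheme) satisfy (Φ^{k+1/3} - Φ^k)/(τ/2) = -i H₁ (Φ^{k+1/3} + Φ^k)/2, (Φ^{k+2/3} - Φ^{k+1/3})/τ = -i H₂ (Φ^{k+2/3} + Φ^{k+1/3})/2, and (Φ^{k+1} - Φ^{k+2/3})/(τ/2) = -i H₁ (Φ^{k+1} + Φ^{k+2/3})/2. Then ‖Φ^{k+1}‖₂ = ‖Φ^k‖₂. -/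
open Matrix

lemma cn_step {N : ℕ} (H : Matrix (Fin N) (Fin N) ℂ) (hH : H.IsHermitian)
    (c : ℂ) (him : c.im = 0) (hre : c.re ≠ 0)
    (x y : EuclideanSpace ℂ (Fin N))
    (h : c • (y - x) = (-Complex.I) • (H *ᵥ ((2 : ℂ)⁻¹ • (y + x)))) :
    ‖y‖ = ‖x‖ := by
  have hsym := Matrix.isHermitian_iff_isSymmetric.mp hH
  set z : EuclideanSpace ℂ (Fin N) := y + x with hz
  set Hz : EuclideanSpace ℂ (Fin N) := WithLp.toLp 2 (H *ᵥ z) with hHzdef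
  have hreal : (inner ℂ z Hz : ℂ).im = 0 := by
    have h1 : (inner ℂ Hz z : ℂ) = inner ℂ z Hz := hsym z z
    have h2 : (starRingEnd ℂ) (inner ℂ z Hz : ℂ) = inner ℂ Hz z := inner_conj_symm _ _
    rw [h1] at h2
    have := congrArg Complex.im h2
    simp only [Complex.conj_im] at this
    linarith
  have h' : c • (y - x) = ((-Complex.I) * (2:ℂ)⁻¹) • Hz := by
    rw [hHzdef, ← smul_smul]
    apply WithLp.ofLp_injective
    rw [WithLp.ofLp_smul, WithLp.ofLp_sub, h, WithLp.ofLp_smul, hz, WithLp.ofLp_add]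
    congr 1
    exact Matrix.mulVec_smul H ((2:ℂ)⁻¹) _
  have key := congrArg (fun w => (inner ℂ z w : ℂ).re) h'
  simp only [inner_smul_right] at key
  have hL : (inner ℂ z (y - x) : ℂ).re = ‖y‖ ^ 2 - ‖x‖ ^ 2 := by
    rw [hz, inner_add_left, inner_sub_right, inner_sub_right]
    have hy : (inner ℂ y y : ℂ) = (‖y‖ : ℂ) ^ 2 := inner_self_eq_norm_sq_to_K y
    have hx : (inner ℂ x x : ℂ) = (‖x‖ : ℂ) ^ 2 := inner_self_eq_norm_sq_to_K x
    have hc : (inner ℂ x y : ℂ).re = (inner ℂ y x : ℂ).re := by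
      rw [← inner_conj_symm y x, Complex.conj_re]
    rw [Complex.add_re, Complex.sub_re, Complex.sub_re, hy, hx, hc]
    simp [← Complex.ofReal_pow]
  have hR : ((-Complex.I) * (2:ℂ)⁻¹ * (inner ℂ z Hz : ℂ)).re = 0 := by
    have : ∀ w : ℂ, w.im = 0 → ((-Complex.I) * (2:ℂ)⁻¹ * w).re = 0 := by
      intro w hw
      simp [Complex.mul_re, Complex.mul_im, hw]
    exact this _ hreal
  rw [hR, Complex.mul_re, hL, him] at key
  have hz2 : ‖y‖ ^ 2 = ‖x‖ ^ 2 := by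
    have : c.re * (‖y‖ ^ 2 - ‖x‖ ^ 2) = 0 := by linarith
    rcases mul_eq_zero.mp this with h0 | h0
    · exact absurd h0 hre
    · linarith
  rw [← Real.sqrt_sq (norm_nonneg y), ← Real.sqrt_sq (norm_nonneg x), hz2]

/-- Mass conservation of one step of the Crank–Nicolson based Strang operator
splitting scheme. -/
theorem crankNicolson_strang_mass_conservation {N : ℕ}
    (H₁ H₂ : Matrix (Fin N) (Fin N) ℂ) (h₁ : H₁.IsHermitian) (h₂ : H₂.IsHermitian)
    (τ : ℝ) (hτ : 0 < τ)
    (Φk Φa Φb Φk1 : EuclideanSpace ℂ (Fin N))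
    (e₁ : (((τ : ℂ) / 2)⁻¹) • (Φa - Φk) =
      (-Complex.I) • (H₁ *ᵥ (((2 : ℂ)⁻¹) • (Φa + Φk))))
    (e₂ : ((τ : ℂ)⁻¹) • (Φb - Φa) =
      (-Complex.I) • (H₂ *ᵥ (((2 : ℂ)⁻¹) • (Φb + Φa))))
    (e₃ : (((τ : ℂ) / 2)⁻¹) • (Φk1 - Φb) =
      (-Complex.I) • (H₁ *ᵥ (((2 : ℂ)⁻¹) • (Φk1 + Φb)))) :
    ‖Φk1‖ = ‖Φk‖ := by
  have hτ' : τ ≠ 0 := ne_of_gt hτ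
  have him1 : (((τ : ℂ) / 2)⁻¹).im = 0 := by
    have : ((τ : ℂ) / 2)⁻¹ = ((τ / 2)⁻¹ : ℝ) := by push_cast; ring
    rw [this, Complex.ofReal_im]
  have hre1 : (((τ : ℂ) / 2)⁻¹).re ≠ 0 := by
    have : ((τ : ℂ) / 2)⁻¹ = ((τ / 2)⁻¹ : ℝ) := by push_cast; ring
    rw [this, Complex.ofReal_re]
    positivity
  have him2 : ((τ : ℂ)⁻¹).im = 0 := by
    rw [← Complex.ofReal_inv, Complex.ofReal_im]
  have hre2 : ((τ : ℂ)⁻¹).re ≠ 0 := by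
    rw [← Complex.ofReal_inv, Complex.ofReal_re]
    positivity
  have s1 : ‖Φa‖ = ‖Φk‖ := cn_step H₁ h₁ _ him1 hre1 _ _ e₁
  have s2 : ‖Φb‖ = ‖Φa‖ := cn_step H₂ h₂ _ him2 hre2 _ _ e₂
  have s3 : ‖Φk1‖ = ‖Φb‖ := cn_step H₁ h₁ _ him1 hre1 _ _ e₃
  rw [s3, s2, s1]
end

section
/- Let D, V₁, V₂ ∈ ℂ^{N×N} with D a real diagonal matrix and V₁, V₂ Hermitian, set H = D + V₁ + V₂, and let Φ(t) = e^{-itH}Φ⁰. Define the semi-implicit scheme Φ^{k+1} = (I + iτD)^{-1}(I - iτ(V₁+V₂))Φᵏ. Then there exist τ₀ > 0 and C_T > 0 such that ‖Φ(t_k) - Φᵏ‖₂ ≤ C_T τ for all 0 < τ < τ₀ and t_k = kτ ∈ [0,T]. -/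
open Matrix
open scoped Matrix.Norms.L2Operator

/-!
`p * (1 - s • v)`, with `p` a left inverse of `1 + s • d`, is the implicit–explicit Euler step
of size `s` for `x' = -(d + v) x`; for `s = iτ` it is the one-step operator `B` of the scheme.
Since `D` is real diagonal, `‖(1 + iτD)⁻¹‖ ≤ 1`, so `‖B‖` and `‖exp(-iτH)‖` are both at most
`exp(τL)` with `L = ‖H‖ + ‖V‖`. The local error is `O(τ²)` because
`(1 + iτD)(1 - iτH) - (1 - iτV) = τ² D H`. Telescoping `a^k - b^k` then gives
`‖exp(-i t_k H) - B^k‖ ≤ k τ² K exp(t_k L) ≤ T K exp(T L) τ`, with `K` depending only on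
`‖D‖` and `‖H‖`.
-/

section NormedRing

variable {A : Type*} [NormedRing A]

theorem norm_pow_le_of_norm_one_le (h1 : ‖(1 : A)‖ ≤ 1) (x : A) (n : ℕ) : ‖x ^ n‖ ≤ ‖x‖ ^ n := by
  rcases n.eq_zero_or_pos with rfl | hn
  · simpa using h1
  · exact norm_pow_le' x hn

theorem norm_pow_sub_pow_le (h1 : ‖(1 : A)‖ ≤ 1) {a b : A} {M : ℝ} (hM : 1 ≤ M)
    (ha : ‖a‖ ≤ M) (hb : ‖b‖ ≤ M) (k : ℕ) : ‖a ^ k - b ^ k‖ ≤ k * M ^ k * ‖a - b‖ := by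
  induction k with
  | zero => simp
  | succ k ih =>
    have hbk : ‖b ^ k‖ ≤ M ^ (k + 1) :=
      (norm_pow_le_of_norm_one_le h1 b k).trans <|
        (pow_le_pow_left₀ (norm_nonneg b) hb k).trans (pow_le_pow_right₀ hM k.le_succ)
    have hsplit : a ^ (k + 1) - b ^ (k + 1) = a * (a ^ k - b ^ k) + (a - b) * b ^ k := by
      rw [mul_sub, sub_mul, ← pow_succ', ← pow_succ']
      abel
    calc ‖a ^ (k + 1) - b ^ (k + 1)‖ ≤ ‖a‖ * ‖a ^ k - b ^ k‖ + ‖a - b‖ * ‖b ^ k‖ := by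
          rw [hsplit]
          exact (norm_add_le _ _).trans (add_le_add (norm_mul_le _ _) (norm_mul_le _ _))
      _ ≤ M * (k * M ^ k * ‖a - b‖) + ‖a - b‖ * M ^ (k + 1) := by
          gcongr
      _ = (k + 1 : ℕ) * M ^ (k + 1) * ‖a - b‖ := by push_cast; ring

end NormedRing

section NormedAlgebra

variable {A : Type*} [NormedRing A]

open Nat in
theorem norm_inv_factorial_smul_pow_le {𝕂 : Type*} [RCLike 𝕂] [NormedAlgebra 𝕂 A]
    (h1 : ‖(1 : A)‖ ≤ 1) (x : A) (n : ℕ) :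
    ‖((n ! : 𝕂)⁻¹) • x ^ n‖ ≤ ‖x‖ ^ n / n ! := by
  rw [norm_smul, norm_inv, RCLike.norm_natCast, div_eq_inv_mul]
  gcongr
  exact norm_pow_le_of_norm_one_le h1 x n

theorem norm_exp_le_exp_norm (𝕂 : Type*) [RCLike 𝕂] [NormedAlgebra 𝕂 A]
    (h1 : ‖(1 : A)‖ ≤ 1) (x : A) :
    ‖NormedSpace.exp x‖ ≤ Real.exp ‖x‖ := by
  rw [congrFun (NormedSpace.exp_eq_tsum 𝕂) x, Real.exp_eq_exp_ℝ]
  exact tsum_of_norm_bounded (NormedSpace.expSeries_div_hasSum_exp ‖x‖)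
    (norm_inv_factorial_smul_pow_le h1 x)

theorem norm_exp_sub_one_sub_le (𝕂 : Type*) [RCLike 𝕂] [NormedAlgebra 𝕂 A] [CompleteSpace A]
    (h1 : ‖(1 : A)‖ ≤ 1) (x : A) :
    ‖NormedSpace.exp x - 1 - x‖ ≤ ‖x‖ ^ 2 * Real.exp ‖x‖ := by
  set f : ℕ → A := fun n => ((n.factorial : 𝕂)⁻¹) • x ^ n
  have hsplit : NormedSpace.exp x - 1 - x = ∑' n, f (n + 2) := by
    rw [congrFun (NormedSpace.exp_eq_tsum 𝕂) x,
      ← (NormedSpace.expSeries_summable' (𝕂 := 𝕂) x).sum_add_tsum_nat_add 2]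
    simp only [Finset.sum_range_succ, Finset.range_one, Finset.sum_singleton, Nat.factorial_zero,
      Nat.factorial_one, Nat.cast_one, inv_one, pow_zero, pow_one, one_smul, f]
    abel
  rw [hsplit, Real.exp_eq_exp_ℝ]
  refine tsum_of_norm_bounded ((NormedSpace.expSeries_div_hasSum_exp ‖x‖).mul_left (‖x‖ ^ 2))
    fun n => ?_
  calc ‖f (n + 2)‖ ≤ ‖x‖ ^ (n + 2) / (n + 2).factorial :=
        norm_inv_factorial_smul_pow_le h1 x (n + 2)
    _ ≤ ‖x‖ ^ (n + 2) / n.factorial := by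
        gcongr
        omega
    _ = ‖x‖ ^ 2 * (‖x‖ ^ n / n.factorial) := by ring

variable {𝕂 : Type*} [RCLike 𝕂] [NormedAlgebra 𝕂 A] {s : 𝕂} {d v p : A}

theorem norm_exp_sub_imexEuler_le [CompleteSpace A] (h1 : ‖(1 : A)‖ ≤ 1)
    (hp : p * (1 + s • d) = 1) (hp1 : ‖p‖ ≤ 1) :
    ‖NormedSpace.exp (-s • (d + v)) - p * (1 - s • v)‖ ≤
      ‖s‖ ^ 2 * ‖d + v‖ * (‖d + v‖ * Real.exp (‖s‖ * ‖d + v‖) + ‖d‖) := by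
  set X := -s • (d + v)
  have hX : ‖X‖ = ‖s‖ * ‖d + v‖ := by rw [norm_smul, norm_neg]
  have hdefect : 1 + X - p * (1 - s • v) = p * (s • d * X) := by
    calc 1 + X - p * (1 - s • v) = p * ((1 + s • d) * (1 + X)) - p * (1 - s • v) := by
          rw [← mul_assoc, hp, one_mul]
      _ = p * (s • d * X) := by
          rw [← mul_sub]
          congr 1
          simp only [X, add_mul, mul_add, one_mul, mul_one, smul_mul_assoc, mul_smul_comm]
          module
  have herror :
      NormedSpace.exp X - p * (1 - s • v) = (NormedSpace.exp X - 1 - X) + p * (s • d * X) := by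
    rw [← hdefect]
    abel
  calc ‖NormedSpace.exp X - p * (1 - s • v)‖
      ≤ ‖NormedSpace.exp X - 1 - X‖ + ‖p * (s • d * X)‖ := herror ▸ norm_add_le _ _
    _ ≤ ‖X‖ ^ 2 * Real.exp ‖X‖ + 1 * (‖s‖ * ‖d‖ * ‖X‖) := by
        gcongr
        · exact norm_exp_sub_one_sub_le 𝕂 h1 X
        · refine (norm_mul_le _ _).trans ?_
          gcongr
          exact (norm_mul_le _ _).trans_eq (by rw [norm_smul])
    _ = ‖s‖ ^ 2 * ‖d + v‖ * (‖d + v‖ * Real.exp (‖s‖ * ‖d + v‖) + ‖d‖) := by rw [hX]; ring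

theorem norm_imexEuler_le (h1 : ‖(1 : A)‖ ≤ 1) (hp1 : ‖p‖ ≤ 1) :
    ‖p * (1 - s • v)‖ ≤ Real.exp (‖s‖ * ‖v‖) :=
  calc ‖p * (1 - s • v)‖ ≤ 1 * (1 + ‖s‖ * ‖v‖) := by
        refine (norm_mul_le _ _).trans ?_
        gcongr
        exact (norm_sub_le _ _).trans (by rw [norm_smul]; gcongr)
    _ ≤ Real.exp (‖s‖ * ‖v‖) := by linarith [Real.add_one_le_exp (‖s‖ * ‖v‖)]

theorem norm_exp_pow_sub_imexEuler_pow_le [CompleteSpace A] (h1 : ‖(1 : A)‖ ≤ 1)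
    (hp : p * (1 + s • d) = 1) (hp1 : ‖p‖ ≤ 1) (hs : ‖s‖ ≤ 1) (k : ℕ) :
    ‖NormedSpace.exp (-s • (d + v)) ^ k - (p * (1 - s • v)) ^ k‖ ≤
      k * ‖s‖ ^ 2 * (‖d + v‖ * (‖d + v‖ * Real.exp ‖d + v‖ + ‖d‖)) *
        Real.exp (k * ‖s‖ * (‖d + v‖ + ‖v‖)) := by
  set M := Real.exp (‖s‖ * (‖d + v‖ + ‖v‖))
  have hexp_le : ‖NormedSpace.exp (-s • (d + v))‖ ≤ M := by
    refine (norm_exp_le_exp_norm 𝕂 h1 _).trans (Real.exp_le_exp.2 ?_)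
    rw [norm_smul, norm_neg]
    gcongr
    exact le_add_of_nonneg_right (norm_nonneg v)
  have hstep_le : ‖p * (1 - s • v)‖ ≤ M := by
    refine (norm_imexEuler_le h1 hp1).trans (Real.exp_le_exp.2 ?_)
    gcongr
    exact le_add_of_nonneg_left (norm_nonneg _)
  have hlocal := norm_exp_sub_imexEuler_le (v := v) h1 hp hp1
  calc _ ≤ k * M ^ k * ‖NormedSpace.exp (-s • (d + v)) - p * (1 - s • v)‖ :=
        norm_pow_sub_pow_le h1 (Real.one_le_exp (by positivity)) hexp_le hstep_le k
    _ ≤ k * M ^ k * (‖s‖ ^ 2 * (‖d + v‖ * (‖d + v‖ * Real.exp ‖d + v‖ + ‖d‖))) := by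
        gcongr
        refine hlocal.trans ?_
        rw [mul_assoc]
        gcongr
        exact mul_le_of_le_one_left (norm_nonneg _) hs
    _ = _ := by rw [← Real.exp_nat_mul]; ring_nf

end NormedAlgebra

theorem Complex.one_le_norm_one_add_I_mul_ofReal (r : ℝ) : 1 ≤ ‖1 + Complex.I * r‖ := by
  simpa using Complex.abs_re_le_norm (1 + Complex.I * r)

namespace Matrix

variable {n : Type*} [Fintype n] [DecidableEq n]

theorem l2_opNorm_one_le {𝕜 : Type*} [RCLike 𝕜] : ‖(1 : Matrix n n 𝕜)‖ ≤ 1 := by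
  rw [← diagonal_one, l2_opNorm_diagonal]
  exact (pi_norm_le_iff_of_nonneg zero_le_one).2 fun _ => by simp

variable {D : Matrix n n ℝ}

theorem IsDiag.diagonal_inv_mul_one_add_I_mul_smul_map_ofReal (hD : D.IsDiag) (t : ℝ) :
    (diagonal fun i => (1 + Complex.I * ↑(t * D i i))⁻¹) *
      (1 + (Complex.I * t) • D.map Complex.ofReal) = 1 := by
  have hdiag : 1 + (Complex.I * t) • D.map Complex.ofReal =
      diagonal fun i => 1 + Complex.I * ↑(t * D i i) := by
    ext i j
    rcases eq_or_ne i j with rfl | hij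
    · simp [mul_assoc]
    · simp [hij, hD hij]
  rw [hdiag, diagonal_mul_diagonal, ← diagonal_one]
  congr
  ext i
  exact inv_mul_cancel₀ <| norm_pos_iff.1 <|
    one_pos.trans_le (Complex.one_le_norm_one_add_I_mul_ofReal _)

theorem IsDiag.inv_one_add_I_mul_smul_map_ofReal_mul_self (hD : D.IsDiag) (t : ℝ) :
    (1 + (Complex.I * t) • D.map Complex.ofReal)⁻¹ *
      (1 + (Complex.I * t) • D.map Complex.ofReal) = 1 := by
  rw [inv_eq_left_inv (hD.diagonal_inv_mul_one_add_I_mul_smul_map_ofReal t)]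
  exact hD.diagonal_inv_mul_one_add_I_mul_smul_map_ofReal t

theorem IsDiag.l2_opNorm_inv_one_add_I_mul_smul_map_ofReal_le_one (hD : D.IsDiag) (t : ℝ) :
    ‖(1 + (Complex.I * t) • D.map Complex.ofReal)⁻¹‖ ≤ 1 := by
  rw [inv_eq_left_inv (hD.diagonal_inv_mul_one_add_I_mul_smul_map_ofReal t), l2_opNorm_diagonal]
  refine (pi_norm_le_iff_of_nonneg zero_le_one).2 fun i => ?_
  rw [norm_inv]
  exact inv_le_one_of_one_le₀ (Complex.one_le_norm_one_add_I_mul_ofReal _)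

end Matrix

theorem semiImplicit_convergence_general {N : ℕ}
    (D : Matrix (Fin N) (Fin N) ℝ) (hD : D.IsDiag)
    (V₁ V₂ : Matrix (Fin N) (Fin N) ℂ)
    (Φ0 : EuclideanSpace ℂ (Fin N)) (T : ℝ) (hT : 0 < T) :
    ∃ τ₀ : ℝ, 0 < τ₀ ∧ ∃ C : ℝ, 0 < C ∧
      ∀ τ : ℝ, 0 < τ → τ < τ₀ → ∀ k : ℕ, (k : ℝ) * τ ≤ T →
        ‖(EuclideanSpace.equiv (Fin N) ℂ).symm
            ((NormedSpace.exp ((-(Complex.I * (((k : ℝ) * τ : ℝ) : ℂ))) •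
                (D.map Complex.ofReal + V₁ + V₂)) *ᵥ Φ0) -
              ((((1 + (Complex.I * (τ : ℂ)) • D.map Complex.ofReal)⁻¹ *
                  (1 - (Complex.I * (τ : ℂ)) • (V₁ + V₂))) ^ k) *ᵥ Φ0))‖ ≤ C * τ := by
  set Dc := D.map Complex.ofReal
  set V := V₁ + V₂
  set K := ‖Dc + V‖ * (‖Dc + V‖ * Real.exp ‖Dc + V‖ + ‖Dc‖)
  set L := ‖Dc + V‖ + ‖V‖
  refine ⟨1, one_pos, T * K * Real.exp (T * L) * ‖Φ0‖ + 1, by positivity,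
    fun τ hτ hτ1 k hk => ?_⟩
  have hs : ‖Complex.I * (τ : ℂ)‖ = τ := by simp [hτ.le]
  have hexp_pow : NormedSpace.exp ((-(Complex.I * (((k : ℝ) * τ : ℝ) : ℂ))) • (Dc + V₁ + V₂)) =
      NormedSpace.exp (-(Complex.I * τ) • (Dc + V)) ^ k := by
    rw [← Matrix.exp_nsmul, add_assoc, ← Nat.cast_smul_eq_nsmul ℂ, smul_smul]
    congr 2
    push_cast
    ring
  have herror := norm_exp_pow_sub_imexEuler_pow_le l2_opNorm_one_le
    (hD.inv_one_add_I_mul_smul_map_ofReal_mul_self τ)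
    (hD.l2_opNorm_inv_one_add_I_mul_smul_map_ofReal_le_one τ) (hs.trans_le hτ1.le) k (v := V)
  rw [hs] at herror
  rw [hexp_pow, ← sub_mulVec]
  calc _ ≤ _ * ‖Φ0‖ := l2_opNorm_mulVec _ _
    _ ≤ (k * τ ^ 2 * K * Real.exp (k * τ * L)) * ‖Φ0‖ := by gcongr
    _ = ((k * τ) * K * Real.exp ((k * τ) * L) * ‖Φ0‖) * τ := by ring
    _ ≤ (T * K * Real.exp (T * L) * ‖Φ0‖) * τ := by gcongr
    _ ≤ (T * K * Real.exp (T * L) * ‖Φ0‖ + 1) * τ := by gcongr; linarith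

/-- First order convergence of the semi-implicit scheme
`Φ^{k+1} = (I + iτD)⁻¹(I - iτ(V₁+V₂))Φᵏ` towards `Φ(t_k) = e^{-i t_k H}Φ⁰`,
where `H = D + V₁ + V₂`, `D` real diagonal and `V₁, V₂` Hermitian. -/
theorem semiImplicit_convergence {N : ℕ}
    (D : Matrix (Fin N) (Fin N) ℝ) (hD : D.IsDiag)
    (V₁ V₂ : Matrix (Fin N) (Fin N) ℂ) (h₁ : V₁.IsHermitian) (h₂ : V₂.IsHermitian)
    (Φ0 : EuclideanSpace ℂ (Fin N)) (T : ℝ) (hT : 0 < T) :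
    ∃ τ₀ : ℝ, 0 < τ₀ ∧ ∃ C : ℝ, 0 < C ∧
      ∀ τ : ℝ, 0 < τ → τ < τ₀ → ∀ k : ℕ, (k : ℝ) * τ ≤ T →
        ‖(EuclideanSpace.equiv (Fin N) ℂ).symm
            ((NormedSpace.exp ((-(Complex.I * (((k : ℝ) * τ : ℝ) : ℂ))) •
                (D.map Complex.ofReal + V₁ + V₂)) *ᵥ Φ0) -
              ((((1 + (Complex.I * (τ : ℂ)) • D.map Complex.ofReal)⁻¹ *
                  (1 - (Complex.I * (τ : ℂ)) • (V₁ + V₂))) ^ k) *ᵥ Φ0))‖ ≤ C * τ :=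
  semiImplicit_convergence_general D hD V₁ V₂ Φ0 T hT
end
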